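/- arXiv:2104.06062 — 4 statements merged into one kernel-verified Lean document; each statement's English description precedes it below -/
import Mathlib

section
/- For integers d ≥ 2 and N ≥ 1 and any real x with 1 ≤ x ≤ d², we have (d^N + x^N)/(d^N(d^N + 1)) ≤ ((d + x)/(d(d + 1)))^N. -/
/-!
For the average fidelity `F a x = (a + x) / (a (a + 1))` one has the polynomial identity
`(a + x)(b + y)(ab + 1) - (ab + xy)(a + 1)(b + 1) = b (y - 1)(a² - x) + a (x - 1)(b² - y)`,
so `F (a b) (x y) ≤ F a x * F b y` whenever `1 ≤ x ≤ a²` and `1 ≤ y ≤ b²`.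
Since `1 ≤ xⁿ ≤ (dⁿ)²`, induction on `N` gives `F (d^N) (x^N) ≤ (F d x)^N`.
-/

noncomputable def avgFidelity (d x : ℝ) : ℝ := (d + x) / (d * (d + 1))

theorem avgFidelity_mul_le {a b x y : ℝ} (ha : 0 ≤ a) (hb : 0 ≤ b)
    (hx1 : 1 ≤ x) (hxa : x ≤ a ^ 2) (hy1 : 1 ≤ y) (hyb : y ≤ b ^ 2) :
    avgFidelity (a * b) (x * y) ≤ avgFidelity a x * avgFidelity b y := by
  have ha0 : 0 < a := by nlinarith
  have hb0 : 0 < b := by nlinarith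
  have hcleared : (a * b + x * y) * (a + 1) * (b + 1) ≤ (a + x) * (b + y) * (a * b + 1) := by
    have := mul_nonneg (mul_nonneg hb (sub_nonneg.2 hy1)) (sub_nonneg.2 hxa)
    have := mul_nonneg (mul_nonneg ha (sub_nonneg.2 hx1)) (sub_nonneg.2 hyb)
    linarith [show (a + x) * (b + y) * (a * b + 1) - (a * b + x * y) * (a + 1) * (b + 1)
      = b * (y - 1) * (a ^ 2 - x) + a * (x - 1) * (b ^ 2 - y) by ring]
  unfold avgFidelity
  rw [div_mul_div_comm, div_le_div_iff₀ (by positivity) (by positivity)]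
  calc (a * b + x * y) * (a * (a + 1) * (b * (b + 1)))
      = a * b * ((a * b + x * y) * (a + 1) * (b + 1)) := by ring
    _ ≤ a * b * ((a + x) * (b + y) * (a * b + 1)) :=
        mul_le_mul_of_nonneg_left hcleared (mul_nonneg ha hb)
    _ = (a + x) * (b + y) * (a * b * (a * b + 1)) := by ring

theorem avgFidelity_pow_le {d x : ℝ} (hd : 0 ≤ d) (hx1 : 1 ≤ x) (hxd : x ≤ d ^ 2) (N : ℕ) :
    avgFidelity (d ^ N) (x ^ N) ≤ avgFidelity d x ^ N := by
  induction N with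
  | zero => norm_num [avgFidelity]
  | succ n ih =>
    have hxn : x ^ n ≤ (d ^ n) ^ 2 := by
      rw [← pow_mul, mul_comm, pow_mul]
      exact pow_le_pow_left₀ (by linarith) hxd n
    calc avgFidelity (d ^ (n + 1)) (x ^ (n + 1))
        = avgFidelity (d ^ n * d) (x ^ n * x) := by rw [pow_succ, pow_succ]
      _ ≤ avgFidelity (d ^ n) (x ^ n) * avgFidelity d x :=
          avgFidelity_mul_le (pow_nonneg hd n) hd (one_le_pow₀ hx1) hxn hx1 hxd
      _ ≤ avgFidelity d x ^ n * avgFidelity d x := by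
          gcongr
          unfold avgFidelity
          have : 0 < d := by nlinarith
          positivity
      _ = avgFidelity d x ^ (n + 1) := (pow_succ _ _).symm

theorem stmt_0_general (d N : ℕ) (x : ℝ)
    (hx1 : 1 ≤ x) (hx2 : x ≤ (d : ℝ) ^ 2) :
    ((d : ℝ) ^ N + x ^ N) / ((d : ℝ) ^ N * ((d : ℝ) ^ N + 1)) ≤
      (((d : ℝ) + x) / ((d : ℝ) * ((d : ℝ) + 1))) ^ N :=
  avgFidelity_pow_le (Nat.cast_nonneg d) hx1 hx2 N

theorem stmt_0 (d N : ℕ) (hd : 2 ≤ d) (hN : 1 ≤ N) (x : ℝ)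
    (hx1 : 1 ≤ x) (hx2 : x ≤ (d : ℝ) ^ 2) :
    ((d : ℝ) ^ N + x ^ N) / ((d : ℝ) ^ N * ((d : ℝ) ^ N + 1)) ≤
      (((d : ℝ) + x) / ((d : ℝ) * ((d : ℝ) + 1))) ^ N :=
  stmt_0_general d N x hx1 hx2
end

section
/- Let T be a d×d column-stochastic matrix such that in each row there is a strictly unique maximal entry. If the (unique) quasi-inverse T^{qi} of T (obtained by placing a 1 at the unique row-maximum of each row and transposing) equals T itself, then T is a symmetric permutation matrix, i.e., T is a permutation matrix with T = Tᵀ. -/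
/-!
The hypothesis says that `T` is the 0/1 matrix of the map `a`, whose row `i` is supported on the
preimage `a⁻¹ {i}`. For the entry at `(i, a i)` to be the strict maximum of row `i` it must be `1`,
so `a (a i) = i`: `a` is an involution, and the matrix of an involution is a symmetric
permutation matrix.
-/

open Matrix

/-- A `d × d` real matrix is column-stochastic if all entries are nonnegative
and each column sums to `1`. -/
def ColStoch {d : ℕ} (T : Matrix (Fin d) (Fin d) ℝ) : Prop :=
  (∀ i j, 0 ≤ T i j) ∧ ∀ j, ∑ i, T i j = 1

variable {n R : Type*} [DecidableEq n]

variable (R) in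
def funMatrix [Zero R] [One R] (a : n → n) : Matrix n n R :=
  of fun j i => if j = a i then 1 else 0

/-- If `a (a i) ≠ i`, the entry of row `i` at column `a i` is `0`, so it cannot strictly exceed
the diagonal entry, which is `0` or `1`. -/
theorem involutive_of_strictRowArgmax_funMatrix [Preorder R] [Zero R] [One R] [ZeroLEOneClass R]
    {a : n → n} (ha : ∀ i j, j ≠ a i → funMatrix R a i j < funMatrix R a i (a i)) :
    Function.Involutive a := by
  intro i
  by_contra h
  have hfix : i ≠ a i := fun he => h (by rw [← he, ← he])
  have hlt := ha i i hfix
  simp only [funMatrix, of_apply, if_neg hfix, if_neg (Ne.symm h)] at hlt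
  exact hlt.false

theorem Function.Involutive.funMatrix_eq_permMatrix [Zero R] [One R] {a : n → n}
    (h : Function.Involutive a) : funMatrix R a = h.toPerm.permMatrix R := by
  ext j i
  have hji : j = a i ↔ i = a j := ⟨fun hj => hj ▸ (h i).symm, fun hi => hi ▸ (h j).symm⟩
  simp [funMatrix, PEquiv.toMatrix_apply, hji, eq_comm]

theorem Function.Involutive.transpose_permMatrix [Zero R] [One R] {a : n → n}
    (h : Function.Involutive a) : (h.toPerm.permMatrix R)ᵀ = h.toPerm.permMatrix R := by
  rw [Matrix.transpose_permMatrix, Equiv.Perm.inv_def, Function.Involutive.toPerm_symm]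

theorem stmt_8_general (d : ℕ) (T : Matrix (Fin d) (Fin d) ℝ)
    (a : Fin d → Fin d) (ha : ∀ i j, j ≠ a i → T i j < T i (a i))
    (hqi : (Matrix.of fun j i => if j = a i then (1 : ℝ) else 0) = T) :
    ∃ σ : Equiv.Perm (Fin d), T = Equiv.Perm.permMatrix ℝ σ ∧ Tᵀ = T := by
  change funMatrix ℝ a = T at hqi
  subst hqi
  have hinv := involutive_of_strictRowArgmax_funMatrix ha
  rw [hinv.funMatrix_eq_permMatrix]
  exact ⟨hinv.toPerm, rfl, hinv.transpose_permMatrix⟩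

theorem stmt_8 (d : ℕ) (T : Matrix (Fin d) (Fin d) ℝ) (hT : ColStoch T)
    (a : Fin d → Fin d) (ha : ∀ i j, j ≠ a i → T i j < T i (a i))
    (hqi : (Matrix.of fun j i => if j = a i then (1 : ℝ) else 0) = T) :
    ∃ σ : Equiv.Perm (Fin d), T = Equiv.Perm.permMatrix ℝ σ ∧ Tᵀ = T :=
  stmt_8_general d T a ha hqi
end

section
/- Let E and E' be quantum channels on a d-dimensional Hilbert space with superoperators Φ_E and Φ_{E'}, and let C_E = Φ_E^R be the Choi matrix of E (with trace d) and p_m its largest eigenvalue. Then trace(Φ_{E'} Φ_E) ≤ d·p_m; consequently the average fidelity of the composition satisfies F̄(E'∘E) ≤ (p_m + 1)/(d + 1). -/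
/-!
With the row-major vectorisation `|K⟩ = vec Kᵀ`, the Choi matrix is `C_E = Σ_α |K_α⟩⟨K_α|`,
while `trace (Φ_{E'} Φ_E) = Σ_{α,β} |tr (K'_β K_α)|²`. As `tr (K'_β K_α) = ⟨x_β, |K_α⟩⟩` with
`x_β = |K'_βᴴ⟩`, the trace is `Σ_β ⟨x_β, C_E x_β⟩`, a sum of Rayleigh quotients of `C_E`,
each at most `p_m ‖x_β‖²`; and `Σ_β ‖x_β‖² = tr (Σ_β K'_βᴴ K'_β) = d` since `E'` is trace
preserving.
-/

open Matrix Kronecker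

/-- The superoperator `Φ = Σ_α K_α ⊗ conj(K_α)` of a channel with Kraus
operators `K_α`. -/
noncomputable def superOp {d r : ℕ} (K : Fin r → Matrix (Fin d) (Fin d) ℂ) :
    Matrix (Fin d × Fin d) (Fin d × Fin d) ℂ :=
  ∑ α, K α ⊗ₖ (K α).map (starRingEnd ℂ)

/-- The Choi matrix `C = Σ_α |K_α⟩⟨K_α|` (the reshuffling of the superoperator):
`C_{(i,j),(k,l)} = Σ_α (K_α)_{ij} conj((K_α)_{kl})`. -/
noncomputable def choi {d r : ℕ} (K : Fin r → Matrix (Fin d) (Fin d) ℂ) :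
    Matrix (Fin d × Fin d) (Fin d × Fin d) ℂ :=
  Matrix.of fun p q => ∑ α, K α p.1 p.2 * (starRingEnd ℂ) (K α q.1 q.2)

open scoped MatrixOrder ComplexOrder

lemma Matrix.IsHermitian.re_star_dotProduct_mulVec_le_iSup_eigenvalues {n : Type*} [Fintype n]
    [DecidableEq n] {A : Matrix n n ℂ} (hA : A.IsHermitian) (v : n → ℂ) :
    (star v ⬝ᵥ A *ᵥ v).re ≤ (⨆ i, hA.eigenvalues i) * (star v ⬝ᵥ v).re := by
  have hle : A ≤ algebraMap ℝ (Matrix n n ℂ) (⨆ i, hA.eigenvalues i) := by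
    refine le_algebraMap_of_spectrum_le (fun x hx => ?_) hA
    obtain ⟨i, rfl⟩ := hA.spectrum_real_eq_range_eigenvalues ▸ hx
    exact le_ciSup (Set.finite_range _).bddAbove i
  have := (Complex.nonneg_iff.mp ((le_iff.mp hle).dotProduct_mulVec_nonneg v)).1
  simpa [sub_mulVec, dotProduct_sub, Algebra.algebraMap_eq_smul_one, smul_mulVec,
    dotProduct_smul] using this

lemma Matrix.trace_mul_eq_star_vec_dotProduct_vec {n : Type*} [Fintype n]
    (A B : Matrix n n ℂ) : (A * B).trace = star (vec Aᴴᵀ) ⬝ᵥ vec Bᵀ := by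
  rw [star_vec_dotProduct_vec, ← trace_transpose_mul]
  congr 2
  ext
  simp

section Channel

variable {d r r' : ℕ}

lemma choi_eq_sum_vecMulVec (K : Fin r → Matrix (Fin d) (Fin d) ℂ) :
    choi K = ∑ α, vecMulVec (vec (K α)ᵀ) (star (vec (K α)ᵀ)) := by
  ext p q
  simp [choi, vecMulVec_apply, Matrix.sum_apply, vec]

lemma star_dotProduct_choi_mulVec (K : Fin r → Matrix (Fin d) (Fin d) ℂ)
    (v : Fin d × Fin d → ℂ) :
    star v ⬝ᵥ choi K *ᵥ v =
      ∑ α, (star v ⬝ᵥ vec (K α)ᵀ) * star (star v ⬝ᵥ vec (K α)ᵀ) := by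
  simp only [choi_eq_sum_vecMulVec, sum_mulVec, vecMulVec_mulVec, op_smul_eq_smul,
    dotProduct_sum, dotProduct_smul, smul_eq_mul, mul_comm]
  simp [star_dotProduct (vec _) v]

lemma trace_superOp_mul_superOp (K : Fin r → Matrix (Fin d) (Fin d) ℂ)
    (K' : Fin r' → Matrix (Fin d) (Fin d) ℂ) :
    (superOp K' * superOp K).trace =
      ∑ β, ∑ α, (K' β * K α).trace * star (K' β * K α).trace := by
  simp only [superOp, Finset.sum_mul_sum, trace_sum, ← mul_kronecker_mul, trace_kronecker]
  simp [trace, mul_apply]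

lemma trace_superOp_mul_superOp_eq_sum_star_dotProduct_choi_mulVec
    (K : Fin r → Matrix (Fin d) (Fin d) ℂ) (K' : Fin r' → Matrix (Fin d) (Fin d) ℂ) :
    (superOp K' * superOp K).trace =
      ∑ β, star (vec (K' β)ᴴᵀ) ⬝ᵥ choi K *ᵥ vec (K' β)ᴴᵀ := by
  rw [trace_superOp_mul_superOp]
  simp only [star_dotProduct_choi_mulVec, trace_mul_eq_star_vec_dotProduct_vec]

lemma sum_star_vec_dotProduct_vec_eq_of_sum_conjTranspose_mul_eq_one
    {K' : Fin r' → Matrix (Fin d) (Fin d) ℂ} (hK' : ∑ β, (K' β)ᴴ * K' β = 1) :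
    ∑ β, star (vec (K' β)ᴴᵀ) ⬝ᵥ vec (K' β)ᴴᵀ = d := by
  simp_rw [← trace_mul_eq_star_vec_dotProduct_vec, trace_mul_comm (K' _), ← trace_sum, hK']
  simp

theorem re_trace_superOp_mul_superOp_le (K : Fin r → Matrix (Fin d) (Fin d) ℂ)
    {K' : Fin r' → Matrix (Fin d) (Fin d) ℂ} (hK' : ∑ β, (K' β)ᴴ * K' β = 1)
    (hC : (choi K).IsHermitian) :
    (superOp K' * superOp K).trace.re ≤ d * ⨆ i, hC.eigenvalues i := by
  have hnorm : ∑ β, (star (vec (K' β)ᴴᵀ) ⬝ᵥ vec (K' β)ᴴᵀ).re = d := by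
    rw [← Complex.re_sum, sum_star_vec_dotProduct_vec_eq_of_sum_conjTranspose_mul_eq_one hK',
      Complex.natCast_re]
  calc (superOp K' * superOp K).trace.re
      = ∑ β, (star (vec (K' β)ᴴᵀ) ⬝ᵥ choi K *ᵥ vec (K' β)ᴴᵀ).re := by
        rw [trace_superOp_mul_superOp_eq_sum_star_dotProduct_choi_mulVec, Complex.re_sum]
    _ ≤ ∑ β, (⨆ i, hC.eigenvalues i) * (star (vec (K' β)ᴴᵀ) ⬝ᵥ vec (K' β)ᴴᵀ).re :=
        Finset.sum_le_sum fun β _ =>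
          hC.re_star_dotProduct_mulVec_le_iSup_eigenvalues (vec (K' β)ᴴᵀ)
    _ = d * ⨆ i, hC.eigenvalues i := by rw [← Finset.mul_sum, hnorm, mul_comm]

end Channel

theorem stmt_12_general (d r r' : ℕ) (hd : 0 < d)
    (K : Fin r → Matrix (Fin d) (Fin d) ℂ)
    (K' : Fin r' → Matrix (Fin d) (Fin d) ℂ) (hK' : ∑ β, (K' β)ᴴ * K' β = 1)
    (hC : (choi K).IsHermitian) :
    ((superOp K') * (superOp K)).trace.re ≤ (d : ℝ) * (⨆ i, hC.eigenvalues i) ∧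
      ((d : ℝ) + ((superOp K') * (superOp K)).trace.re) / ((d : ℝ) * ((d : ℝ) + 1)) ≤
        ((⨆ i, hC.eigenvalues i) + 1) / ((d : ℝ) + 1) := by
  have hT := re_trace_superOp_mul_superOp_le K hK' hC
  refine ⟨hT, ?_⟩
  have hd' : (0 : ℝ) < d := Nat.cast_pos.mpr hd
  calc ((d : ℝ) + (superOp K' * superOp K).trace.re) / (d * (d + 1))
      ≤ (d + d * ⨆ i, hC.eigenvalues i) / (d * (d + 1)) := by gcongr
    _ = ((⨆ i, hC.eigenvalues i) + 1) / (d + 1) := by field_simp; ring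

theorem stmt_12 (d r r' : ℕ) (hd : 0 < d)
    (K : Fin r → Matrix (Fin d) (Fin d) ℂ) (hK : ∑ α, (K α)ᴴ * K α = 1)
    (K' : Fin r' → Matrix (Fin d) (Fin d) ℂ) (hK' : ∑ β, (K' β)ᴴ * K' β = 1)
    (hC : (choi K).IsHermitian) :
    ((superOp K') * (superOp K)).trace.re ≤ (d : ℝ) * (⨆ i, hC.eigenvalues i) ∧
      ((d : ℝ) + ((superOp K') * (superOp K)).trace.re) / ((d : ℝ) * ((d : ℝ) + 1)) ≤
        ((⨆ i, hC.eigenvalues i) + 1) / ((d : ℝ) + 1) :=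
  stmt_12_general d r r' hd K K' hK' hC
end

section
/- Let d ≥ 2 and let d₁, d₂, m₁, m₂ be positive integers with d₁ + d₂ = m₁ + m₂ = d. Define the measure-and-prepare map E(ρ) = (1/d₁)·trace(Q₁ρ)·P₁ + (1/d₂)·trace(Q₂ρ)·P₂, where P₁, P₂ (resp. Q₁, Q₂) are complementary orthogonal projectors of ranks d₁, d₂ (resp. m₁, m₂). Let A = (m₂Q₁ − m₁Q₂)/√(m₁m₂) and B = (d₂P₁ − d₁P₂)/√(d₁d₂). Then for the state ρ = (1/d)(I + xA) with x ∈ ℝ (whenever ρ ≥ 0), one has E(ρ) = (1/d)(I + x′B) with x′ = √(m₁m₂/(d₁d₂))·x + (m₁d₂ − m₂d₁)/(d√(d₁d₂)). In particular, if m₁m₂ > d₁d₂ the Bloch coefficient is stretched: |coefficient of x′ in x| > 1. -/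
/-!
With s = √(m₁m₂) and t = √(d₁d₂), the identity I = Q₁ + Q₂ writes ρ as α₁Q₁ + α₂Q₂, so
trace(Qᵢρ) = αᵢ·rank Qᵢ = αᵢmᵢ, the trace of an idempotent being its rank. Likewise I = P₁ + P₂ writes
both E(ρ) and (1/d)(I + x′B) as combinations of P₁ and P₂; comparing coefficients leaves two scalar
identities, which follow from s² = m₁m₂, t² = d₁d₂ and d₁ + d₂ = m₁ + m₂ = d.
-/

open Matrix ComplexOrder

theorem Matrix.trace_eq_rank_of_isIdempotentElem {K n : Type*} [Field K] [Fintype n]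
    [DecidableEq n] {Q : Matrix n n K} (hQ : IsIdempotentElem Q) : Q.trace = Q.rank := by
  have hlin : IsIdempotentElem Q.toLin' := hQ.map Matrix.toLinAlgEquiv'
  rw [← Matrix.trace_toLin'_eq, (LinearMap.IsIdempotentElem.isProj_range _ hlin).trace]
  rfl

section

variable {K A : Type*} [CommRing K] [Ring A] [Algebra K A]

theorem IsIdempotentElem.mul_smul_add_smul {e f : A} (he : IsIdempotentElem e) (hef : e * f = 0)
    (a b : K) : e * (a • e + b • f) = a • e := by
  rw [mul_add, mul_smul_comm, mul_smul_comm, he.eq, hef, smul_zero, add_zero]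

theorem smul_one_add_smul_smul_sub_of_add_eq_one {p q : A} (hpq : p + q = 1) (c y r a b : K) :
    c • (1 + y • (r • (a • p - b • q))) =
      (c * (1 + y * r * a)) • p + (c * (1 - y * r * b)) • q := by
  rw [← hpq]
  module

end

theorem smul_add_smul_eq_bloch_coeffs {K M : Type*} [Field K] [AddCommGroup M] [Module K M]
    (p q : M) {d d1 d2 m1 m2 s t x x' : K}
    (hd1 : d1 ≠ 0) (hd2 : d2 ≠ 0) (hdsum : d1 + d2 = d) (hmsum : m1 + m2 = d)
    (hs : s * s = m1 * m2) (ht : t * t = d1 * d2)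
    (hx' : x' = s / t * x + (m1 * d2 - m2 * d1) / (d * t)) :
    (d1⁻¹ * (d⁻¹ * (1 + x * s⁻¹ * m2) * m1)) • p + (d2⁻¹ * (d⁻¹ * (1 - x * s⁻¹ * m1) * m2)) • q =
      (d⁻¹ * (1 + x' * t⁻¹ * d2)) • p + (d⁻¹ * (1 - x' * t⁻¹ * d1)) • q := by
  have ht0 : t ≠ 0 := by rintro rfl; simp_all
  have hs' : s⁻¹ * (m1 * m2) = s := by rw [← hs, ← mul_assoc, inv_mul_mul_self]
  have htd1 : t⁻¹ * d2 = t / d1 := by field_simp; linear_combination -ht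
  have htd2 : t⁻¹ * d1 = t / d2 := by field_simp; linear_combination -ht
  rcases eq_or_ne d 0 with rfl | hd
  · simp
  subst hx'
  congr 2
  · calc d1⁻¹ * (d⁻¹ * (1 + x * s⁻¹ * m2) * m1) = d⁻¹ * (m1 + x * s) / d1 := by
          linear_combination (d1⁻¹ * d⁻¹ * x) * hs'
      _ = _ := by
        rw [mul_assoc _ t⁻¹, htd1]
        field_simp
        linear_combination (-m1) * hdsum + d1 * hmsum
  · calc d2⁻¹ * (d⁻¹ * (1 - x * s⁻¹ * m1) * m2) = d⁻¹ * (m2 - x * s) / d2 := by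
          linear_combination (-d2⁻¹ * d⁻¹ * x) * hs'
      _ = _ := by
        rw [mul_assoc _ t⁻¹, htd2]
        field_simp
        linear_combination (-m2) * hdsum + d2 * hmsum

theorem stmt_18_general (d d1 d2 m1 m2 : ℕ) (hd1 : 0 < d1) (hd2 : 0 < d2)
    (hdsum : d1 + d2 = d) (hmsum : m1 + m2 = d)
    (P1 P2 Q1 Q2 : Matrix (Fin d) (Fin d) ℂ)
    (hQ1i : Q1 * Q1 = Q1) (hQ2i : Q2 * Q2 = Q2)
    (hPsum : P1 + P2 = 1) (hQsum : Q1 + Q2 = 1)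
    (hQorth : Q1 * Q2 = 0)
    (hrQ1 : Q1.rank = m1) (hrQ2 : Q2.rank = m2)
    (x : ℝ) :
    -- E(ρ) = (1/d)(I + x′·B) with the stated Bloch coefficient x′
    ((d1 : ℂ))⁻¹ • ((Q1 * (((d : ℂ))⁻¹ • (1 + (x : ℂ) •
          (((Real.sqrt ((m1 : ℝ) * m2) : ℝ) : ℂ)⁻¹ •
            ((m2 : ℂ) • Q1 - (m1 : ℂ) • Q2))))).trace • P1) +
      ((d2 : ℂ))⁻¹ • ((Q2 * (((d : ℂ))⁻¹ • (1 + (x : ℂ) •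
          (((Real.sqrt ((m1 : ℝ) * m2) : ℝ) : ℂ)⁻¹ •
            ((m2 : ℂ) • Q1 - (m1 : ℂ) • Q2))))).trace • P2) =
      ((d : ℂ))⁻¹ • (1 +
        ((Real.sqrt (((m1 : ℝ) * m2) / ((d1 : ℝ) * d2)) * x +
            ((m1 : ℝ) * d2 - (m2 : ℝ) * d1) / ((d : ℝ) * Real.sqrt ((d1 : ℝ) * d2)) : ℝ) : ℂ) •
          (((Real.sqrt ((d1 : ℝ) * d2) : ℝ) : ℂ)⁻¹ •
            ((d2 : ℂ) • P1 - (d1 : ℂ) • P2))) ∧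
      -- if m₁m₂ > d₁d₂, the Bloch coefficient is stretched
      (d1 * d2 < m1 * m2 → 1 < Real.sqrt (((m1 : ℝ) * m2) / ((d1 : ℝ) * d2))) := by
  have hdd : (0 : ℝ) < d1 * d2 := by positivity
  refine ⟨?_, fun hlt => ?_⟩
  · have hQ21 : Q2 * Q1 = 0 := by
      rw [eq_sub_of_add_eq' hQsum]
      exact IsIdempotentElem.one_sub_mul_self hQ1i
    rw [smul_one_add_smul_smul_sub_of_add_eq_one hQsum,
      smul_one_add_smul_smul_sub_of_add_eq_one hPsum,
      IsIdempotentElem.mul_smul_add_smul hQ1i hQorth, add_comm (_ • Q1),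
      IsIdempotentElem.mul_smul_add_smul hQ2i hQ21, trace_smul, trace_smul,
      trace_eq_rank_of_isIdempotentElem hQ1i, trace_eq_rank_of_isIdempotentElem hQ2i, hrQ1, hrQ2,
      smul_eq_mul, smul_eq_mul, smul_smul, smul_smul]
    refine smul_add_smul_eq_bloch_coeffs P1 P2 (by exact_mod_cast hd1.ne')
      (by exact_mod_cast hd2.ne') (by exact_mod_cast hdsum) (by exact_mod_cast hmsum) ?_ ?_ ?_
    · rw [← Complex.ofReal_mul, Real.mul_self_sqrt (by positivity)]
      norm_cast
    · rw [← Complex.ofReal_mul, Real.mul_self_sqrt hdd.le]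
      norm_cast
    · rw [Real.sqrt_div' _ hdd.le]
      norm_cast
  · rw [Real.lt_sqrt zero_le_one, one_pow, one_lt_div hdd]
    exact_mod_cast hlt

theorem stmt_18 (d d1 d2 m1 m2 : ℕ) (hd : 2 ≤ d)
    (hd1 : 0 < d1) (hd2 : 0 < d2) (hm1 : 0 < m1) (hm2 : 0 < m2)
    (hdsum : d1 + d2 = d) (hmsum : m1 + m2 = d)
    (P1 P2 Q1 Q2 : Matrix (Fin d) (Fin d) ℂ)
    (hP1h : P1.IsHermitian) (hP2h : P2.IsHermitian)
    (hQ1h : Q1.IsHermitian) (hQ2h : Q2.IsHermitian)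
    (hP1i : P1 * P1 = P1) (hP2i : P2 * P2 = P2)
    (hQ1i : Q1 * Q1 = Q1) (hQ2i : Q2 * Q2 = Q2)
    (hPsum : P1 + P2 = 1) (hQsum : Q1 + Q2 = 1)
    (hPorth : P1 * P2 = 0) (hQorth : Q1 * Q2 = 0)
    (hrP1 : P1.rank = d1) (hrP2 : P2.rank = d2)
    (hrQ1 : Q1.rank = m1) (hrQ2 : Q2.rank = m2)
    (x : ℝ)
    -- the state ρ = (1/d)(I + x·A), assumed positive semidefinite
    (hρ : (((d : ℂ))⁻¹ • (1 + (x : ℂ) •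
        (((Real.sqrt ((m1 : ℝ) * m2) : ℝ) : ℂ)⁻¹ •
          ((m2 : ℂ) • Q1 - (m1 : ℂ) • Q2)))).PosSemidef) :
    -- E(ρ) = (1/d)(I + x′·B) with the stated Bloch coefficient x′
    ((d1 : ℂ))⁻¹ • ((Q1 * (((d : ℂ))⁻¹ • (1 + (x : ℂ) •
          (((Real.sqrt ((m1 : ℝ) * m2) : ℝ) : ℂ)⁻¹ •
            ((m2 : ℂ) • Q1 - (m1 : ℂ) • Q2))))).trace • P1) +
      ((d2 : ℂ))⁻¹ • ((Q2 * (((d : ℂ))⁻¹ • (1 + (x : ℂ) •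
          (((Real.sqrt ((m1 : ℝ) * m2) : ℝ) : ℂ)⁻¹ •
            ((m2 : ℂ) • Q1 - (m1 : ℂ) • Q2))))).trace • P2) =
      ((d : ℂ))⁻¹ • (1 +
        ((Real.sqrt (((m1 : ℝ) * m2) / ((d1 : ℝ) * d2)) * x +
            ((m1 : ℝ) * d2 - (m2 : ℝ) * d1) / ((d : ℝ) * Real.sqrt ((d1 : ℝ) * d2)) : ℝ) : ℂ) •
          (((Real.sqrt ((d1 : ℝ) * d2) : ℝ) : ℂ)⁻¹ •
            ((d2 : ℂ) • P1 - (d1 : ℂ) • P2))) ∧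
      -- if m₁m₂ > d₁d₂, the Bloch coefficient is stretched
      (d1 * d2 < m1 * m2 → 1 < Real.sqrt (((m1 : ℝ) * m2) / ((d1 : ℝ) * d2))) :=
  stmt_18_general d d1 d2 m1 m2 hd1 hd2 hdsum hmsum P1 P2 Q1 Q2 hQ1i hQ2i hPsum hQsum hQorth hrQ1
    hrQ2 x
end
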